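/- Let a, r, C₂ ∈ ℂ with a ≠ 0 and set b = a. Set Ī(t) = C₂·e^{-a·t} and X̄(t) = exp((r·C₂/a)·e^{-a·t}). Define δS(t) = 0, δE(t) = e^{-a·t}, δI(t) = a·t·e^{-a·t}, δX(t) = (r/a)·((a·t + 1)·e^{-a·t} − 1)·X̄(t), δY(t) = (r/a)·(e^{-a·t} − 1), δZ(t) = 0. Then (δS, δE, δI, δX, δY, δZ) is a solution of the variational equation δS' = -r·Ī(t)·δS, δE' = r·Ī(t)·δS - a·δE, δI' = a·δE - a·δI, δX' = -r·X̄(t)·δI - r·Ī(t)·δX, δY' = -(r·a/a)·δE, δZ' = -(r²/a)·Ī(t)·δS on ℝ, with initial value (0, 1, 0, 0, 0, 0) at t = 0. -/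
import Mathlib


/-- `Ī(t) = C₂·e^{-a t}`. -/
noncomputable def Ibar (a C₂ : ℂ) (t : ℝ) : ℂ := C₂ * Complex.exp (-a * t)

/-- `X̄(t) = exp((r C₂ / a)·e^{-a t})`. -/
noncomputable def Xbar (a r C₂ : ℂ) (t : ℝ) : ℂ :=
  Complex.exp (r * C₂ / a * Complex.exp (-a * t))

/-- `δE(t) = e^{-a t}`. -/
noncomputable def dE (a : ℂ) (t : ℝ) : ℂ := Complex.exp (-a * t)

/-- `δI(t) = a t e^{-a t}`. -/
noncomputable def dI (a : ℂ) (t : ℝ) : ℂ := a * t * Complex.exp (-a * t)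

/-- `δX(t) = (r/a)((a t + 1)e^{-a t} − 1) X̄(t)`. -/
noncomputable def dX (a r C₂ : ℂ) (t : ℝ) : ℂ :=
  r / a * ((a * t + 1) * Complex.exp (-a * t) - 1) * Xbar a r C₂ t

/-- `δY(t) = (r/a)(e^{-a t} − 1)`. -/
noncomputable def dY (a r : ℂ) (t : ℝ) : ℂ := r / a * (Complex.exp (-a * t) - 1)

private lemma hasDerivAt_lin (c : ℂ) (t : ℝ) :
    HasDerivAt (fun s : ℝ => c * (s : ℂ)) c t := by
  simpa using (Complex.ofRealCLM.hasDerivAt (x := t)).const_mul c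

private lemma hasDerivAt_exp_neg (a : ℂ) (t : ℝ) :
    HasDerivAt (fun s : ℝ => Complex.exp (-a * s)) (-a * Complex.exp (-a * t)) t := by
  simpa [mul_comm] using (hasDerivAt_lin (-a) t).cexp

/-- The second solution of the variational equation of the extended SEIR system
in the case `a = b`, with initial value `(0,1,0,0,0,0)`. -/
theorem variational_solution_two_a_eq_b (a r C₂ : ℂ) (ha : a ≠ 0) :
    (∀ t : ℝ,
      HasDerivAt (fun _ : ℝ => (0 : ℂ)) (-r * Ibar a C₂ t * 0) t ∧
      HasDerivAt (dE a) (r * Ibar a C₂ t * 0 - a * dE a t) t ∧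
      HasDerivAt (dI a) (a * dE a t - a * dI a t) t ∧
      HasDerivAt (dX a r C₂)
        (-r * Xbar a r C₂ t * dI a t - r * Ibar a C₂ t * dX a r C₂ t) t ∧
      HasDerivAt (dY a r) (-(r * a / a) * dE a t) t ∧
      HasDerivAt (fun _ : ℝ => (0 : ℂ)) (-(r ^ 2 / a) * Ibar a C₂ t * 0) t) ∧
    (0 : ℂ) = 0 ∧ dE a 0 = 1 ∧ dI a 0 = 0 ∧ dX a r C₂ 0 = 0 ∧ dY a r 0 = 0 ∧
    (0 : ℂ) = 0 := by
  constructor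
  · intro t
    have hE := hasDerivAt_exp_neg a t
    have hXbar : HasDerivAt (Xbar a r C₂) (-r * Ibar a C₂ t * Xbar a r C₂ t) t := by
      have h1 : HasDerivAt (fun s : ℝ => r * C₂ / a * Complex.exp (-a * s))
          (r * C₂ / a * (-a * Complex.exp (-a * t))) t := hE.const_mul _
      have h2 := h1.cexp
      have heq : Complex.exp (r * C₂ / a * Complex.exp (-a * t)) *
          (r * C₂ / a * (-a * Complex.exp (-a * t))) = -r * Ibar a C₂ t * Xbar a r C₂ t := by
        simp only [Ibar, Xbar]; field_simp
      rw [heq] at h2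
      exact h2
    refine ⟨by simpa using (hasDerivAt_const t (0:ℂ)), ?_, ?_, ?_, ?_,
      by simpa using (hasDerivAt_const t (0:ℂ))⟩
    · have heq : r * Ibar a C₂ t * 0 - a * dE a t = -a * Complex.exp (-a * t) := by
        simp [dE]
      rw [heq]; exact hE
    · have h1 := (hasDerivAt_lin a t).mul hE
      have heq : a * dE a t - a * dI a t =
          a * Complex.exp (-a * t) + a * t * (-a * Complex.exp (-a * t)) := by
        simp only [dE, dI]; ring
      rw [heq]; exact h1
    · have hg : HasDerivAt (fun s : ℝ => (a * s + 1) * Complex.exp (-a * s) - 1)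
          (a * Complex.exp (-a * t) + (a * t + 1) * (-a * Complex.exp (-a * t))) t :=
        (((hasDerivAt_lin a t).add_const 1).mul hE).sub_const 1
      have h := (hg.const_mul (r / a)).mul hXbar
      have heq : -r * Xbar a r C₂ t * dI a t - r * Ibar a C₂ t * dX a r C₂ t =
          r / a * (a * Complex.exp (-a * t) + (a * t + 1) * (-a * Complex.exp (-a * t))) *
            Xbar a r C₂ t +
          r / a * ((a * t + 1) * Complex.exp (-a * t) - 1) *
            (-r * Ibar a C₂ t * Xbar a r C₂ t) := by
        simp only [dI, dX]; field_simp; ring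
      rw [heq]; exact h
    · have h := (hE.sub_const 1).const_mul (r / a)
      have heq : -(r * a / a) * dE a t = r / a * (-a * Complex.exp (-a * t)) := by
        simp only [dE]; field_simp
      rw [heq]; exact h
  · refine ⟨rfl, by simp [dE], by simp [dI], by simp [dX], by simp [dY], rfl⟩
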